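/- Let G = G₁G₂ = G₂G₁ be a matched pair of subgroupoids with maps θ(x,y) = (x·p₁(p₂(x)⁻¹y), p₂(x)⁻¹y) defined on {(x,y) : m(x) = r(y)}. Then θ is a bijection from {(x,y) : m(x) = r(y)} onto {(x,y) : s(x) = m(y)}, with inverse θ⁻¹(g,g') = (g·p₁(g')⁻¹, p₂(g·p₁(g')⁻¹)·g'). -/

import Mathlib

/-!
The maps are mutually inverse by pure groupoid algebra: with `z = p₂(x)⁻¹ y`, the first
component of `θ(x, y)` is `x p₁(z)`, from which right multiplication by `p₁(z)⁻¹` recovers `x`,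
and then `p₂(x) z = y`; symmetrically for `θ⁻¹`. The factorization enters only
through the source/range identities `s ∘ p₁ = r ∘ p₂`, `r ∘ p₁ = r` and `s ∘ p₂ = s`.
-/

/-- A groupoid presented algebraically: a set of arrows with source `s`, range `r`,
a (total) multiplication which is only meaningful on composable pairs (`s x = r y`),
and inversion. Units are the elements in the range of `s`. -/
structure PreGroupoid (G : Type*) where
  s : G → G
  r : G → G
  mul : G → G → G
  inv : G → G
  s_s : ∀ x, s (s x) = s x
  r_s : ∀ x, r (s x) = s x
  s_r : ∀ x, s (r x) = r x
  r_r : ∀ x, r (r x) = r x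
  r_mul : ∀ x y, s x = r y → r (mul x y) = r x
  s_mul : ∀ x y, s x = r y → s (mul x y) = s y
  mul_assoc' : ∀ x y z, s x = r y → s y = r z → mul (mul x y) z = mul x (mul y z)
  id_left : ∀ x, mul (r x) x = x
  id_right : ∀ x, mul x (s x) = x
  s_inv : ∀ x, s (inv x) = r x
  r_inv : ∀ x, r (inv x) = s x
  inv_mul : ∀ x, mul (inv x) x = s x
  mul_inv : ∀ x, mul x (inv x) = r x

namespace PreGroupoid

variable {G : Type*}

/-- The set of units `G⁰` of the groupoid. -/
def units (Gp : PreGroupoid G) : Set G := Set.range Gp.s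

/-- A subgroupoid: contains all units, closed under composable products and inverses. -/
structure IsSubgroupoid (Gp : PreGroupoid G) (S : Set G) : Prop where
  unit_mem : ∀ x, Gp.s x ∈ S
  mul_mem : ∀ {x y}, x ∈ S → y ∈ S → Gp.s x = Gp.r y → Gp.mul x y ∈ S
  inv_mem : ∀ {x}, x ∈ S → Gp.inv x ∈ S

/-- `p₁, p₂` factor every element of `G` as a composable product `g = p₁(g) p₂(g)`
with `p₁(g) ∈ G₁` and `p₂(g) ∈ G₂`. -/
def IsFactorization (Gp : PreGroupoid G) (G₁ G₂ : Set G) (p₁ p₂ : G → G) : Prop :=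
  ∀ g, p₁ g ∈ G₁ ∧ p₂ g ∈ G₂ ∧ Gp.s (p₁ g) = Gp.r (p₂ g) ∧ Gp.mul (p₁ g) (p₂ g) = g

/-- Uniqueness of composable factorizations with first factor in `G₁`, second in `G₂`. -/
def UniqueFactorization (Gp : PreGroupoid G) (G₁ G₂ : Set G) : Prop :=
  ∀ g₁ g₂ h₁ h₂, g₁ ∈ G₁ → g₂ ∈ G₂ → h₁ ∈ G₁ → h₂ ∈ G₂ →
    Gp.s g₁ = Gp.r g₂ → Gp.s h₁ = Gp.r h₂ →
    Gp.mul g₁ g₂ = Gp.mul h₁ h₂ → g₁ = h₁ ∧ g₂ = h₂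

end PreGroupoid

namespace PreGroupoid

variable {G : Type*} (Gp : PreGroupoid G) {x y : G}

theorem mul_inv_cancel_right (h : Gp.s x = Gp.r y) : Gp.mul (Gp.mul x y) (Gp.inv y) = x := by
  rw [Gp.mul_assoc' x y _ h (Gp.r_inv y).symm, Gp.mul_inv, ← h, Gp.id_right]

theorem inv_mul_cancel_right (h : Gp.s x = Gp.s y) : Gp.mul (Gp.mul x (Gp.inv y)) y = x := by
  rw [Gp.mul_assoc' x _ y (by rw [Gp.r_inv, h]) (Gp.s_inv y), Gp.inv_mul, ← h, Gp.id_right]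

theorem mul_inv_cancel_left (h : Gp.r x = Gp.r y) : Gp.mul x (Gp.mul (Gp.inv x) y) = y := by
  rw [← Gp.mul_assoc' x _ y (Gp.r_inv x).symm (by rw [Gp.s_inv, h]), Gp.mul_inv, h, Gp.id_left]

theorem inv_mul_cancel_left (h : Gp.s x = Gp.r y) : Gp.mul (Gp.inv x) (Gp.mul x y) = y := by
  rw [← Gp.mul_assoc' _ x y (Gp.s_inv x) h, Gp.inv_mul, h, Gp.id_left]

theorem r_inv_mul (h : Gp.r x = Gp.r y) : Gp.r (Gp.mul (Gp.inv x) y) = Gp.s x := by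
  rw [Gp.r_mul _ _ (by rw [Gp.s_inv, h]), Gp.r_inv]

theorem s_mul_inv (h : Gp.s x = Gp.s y) : Gp.s (Gp.mul x (Gp.inv y)) = Gp.r y := by
  rw [Gp.s_mul _ _ (by rw [Gp.r_inv, h]), Gp.s_inv]

def theta (p₁ p₂ : G → G) (q : G × G) : G × G :=
  (Gp.mul q.1 (p₁ (Gp.mul (Gp.inv (p₂ q.1)) q.2)), Gp.mul (Gp.inv (p₂ q.1)) q.2)

def thetaInv (p₁ p₂ : G → G) (q : G × G) : G × G :=
  (Gp.mul q.1 (Gp.inv (p₁ q.2)), Gp.mul (p₂ (Gp.mul q.1 (Gp.inv (p₁ q.2)))) q.2)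

namespace IsFactorization

variable {Gp} {G₁ G₂ : Set G} {p₁ p₂ : G → G}

theorem s_fst_eq_r_snd (hf : Gp.IsFactorization G₁ G₂ p₁ p₂) (g : G) :
    Gp.s (p₁ g) = Gp.r (p₂ g) :=
  (hf g).2.2.1

theorem r_fst (hf : Gp.IsFactorization G₁ G₂ p₁ p₂) (g : G) : Gp.r (p₁ g) = Gp.r g := by
  conv_rhs => rw [← (hf g).2.2.2, Gp.r_mul _ _ (hf.s_fst_eq_r_snd g)]

theorem s_snd (hf : Gp.IsFactorization G₁ G₂ p₁ p₂) (g : G) : Gp.s (p₂ g) = Gp.s g := by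
  conv_rhs => rw [← (hf g).2.2.2, Gp.s_mul _ _ (hf.s_fst_eq_r_snd g)]

theorem r_inv_snd_mul (hf : Gp.IsFactorization G₁ G₂ p₁ p₂) (hxy : Gp.s (p₁ x) = Gp.r y) :
    Gp.r (Gp.mul (Gp.inv (p₂ x)) y) = Gp.s x := by
  rw [Gp.r_inv_mul (by rw [← hf.s_fst_eq_r_snd, hxy]), hf.s_snd]

theorem s_mul_inv_fst (hf : Gp.IsFactorization G₁ G₂ p₁ p₂) (hxy : Gp.s x = Gp.s (p₁ y)) :
    Gp.s (Gp.mul x (Gp.inv (p₁ y))) = Gp.r y := by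
  rw [Gp.s_mul_inv hxy, hf.r_fst]

theorem s_theta_fst (hf : Gp.IsFactorization G₁ G₂ p₁ p₂) (hxy : Gp.s (p₁ x) = Gp.r y) :
    Gp.s (Gp.theta p₁ p₂ (x, y)).1 = Gp.s (p₁ (Gp.theta p₁ p₂ (x, y)).2) :=
  Gp.s_mul _ _ (by rw [hf.r_fst, hf.r_inv_snd_mul hxy])

theorem s_fst_thetaInv (hf : Gp.IsFactorization G₁ G₂ p₁ p₂) (hxy : Gp.s x = Gp.s (p₁ y)) :
    Gp.s (p₁ (Gp.thetaInv p₁ p₂ (x, y)).1) = Gp.r (Gp.thetaInv p₁ p₂ (x, y)).2 := by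
  rw [thetaInv, Gp.r_mul _ _ (by rw [hf.s_snd, hf.s_mul_inv_fst hxy]), hf.s_fst_eq_r_snd]

theorem thetaInv_theta (hf : Gp.IsFactorization G₁ G₂ p₁ p₂) (hxy : Gp.s (p₁ x) = Gp.r y) :
    Gp.thetaInv p₁ p₂ (Gp.theta p₁ p₂ (x, y)) = (x, y) := by
  have hx : Gp.mul (Gp.mul x (p₁ (Gp.mul (Gp.inv (p₂ x)) y)))
      (Gp.inv (p₁ (Gp.mul (Gp.inv (p₂ x)) y))) = x :=
    Gp.mul_inv_cancel_right (by rw [hf.r_fst, hf.r_inv_snd_mul hxy])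
  simp only [theta, thetaInv, hx, Gp.mul_inv_cancel_left (x := p₂ x) (y := y)
    (by rw [← hf.s_fst_eq_r_snd, hxy])]

theorem theta_thetaInv (hf : Gp.IsFactorization G₁ G₂ p₁ p₂) (hxy : Gp.s x = Gp.s (p₁ y)) :
    Gp.theta p₁ p₂ (Gp.thetaInv p₁ p₂ (x, y)) = (x, y) := by
  have hy : Gp.mul (Gp.inv (p₂ (Gp.mul x (Gp.inv (p₁ y)))))
      (Gp.mul (p₂ (Gp.mul x (Gp.inv (p₁ y)))) y) = y :=
    Gp.inv_mul_cancel_left (by rw [hf.s_snd, hf.s_mul_inv_fst hxy])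
  simp only [theta, thetaInv, hy, Gp.inv_mul_cancel_right hxy]

end IsFactorization

end PreGroupoid

theorem stmt8_general {G : Type*} (Gp : PreGroupoid G) (G₁ G₂ : Set G)
    (p₁ p₂ : G → G)
    (hfact : Gp.IsFactorization G₁ G₂ p₁ p₂)
    (θ θinv : G × G → G × G)
    (hθ : ∀ p, θ p = (Gp.mul p.1 (p₁ (Gp.mul (Gp.inv (p₂ p.1)) p.2)),
                      Gp.mul (Gp.inv (p₂ p.1)) p.2))
    (hθinv : ∀ p, θinv p = (Gp.mul p.1 (Gp.inv (p₁ p.2)),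
                            Gp.mul (p₂ (Gp.mul p.1 (Gp.inv (p₁ p.2)))) p.2)) :
    (∀ x y, Gp.s (p₁ x) = Gp.r y → Gp.s (θ (x, y)).1 = Gp.s (p₁ (θ (x, y)).2)) ∧
    (∀ x y, Gp.s x = Gp.s (p₁ y) → Gp.s (p₁ (θinv (x, y)).1) = Gp.r (θinv (x, y)).2) ∧
    (∀ x y, Gp.s (p₁ x) = Gp.r y → θinv (θ (x, y)) = (x, y)) ∧
    (∀ x y, Gp.s x = Gp.s (p₁ y) → θ (θinv (x, y)) = (x, y)) := by
  obtain rfl : θ = Gp.theta p₁ p₂ := funext hθ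
  obtain rfl : θinv = Gp.thetaInv p₁ p₂ := funext hθinv
  exact ⟨fun _ _ => hfact.s_theta_fst, fun _ _ => hfact.s_fst_thetaInv,
    fun _ _ => hfact.thetaInv_theta, fun _ _ => hfact.theta_thetaInv⟩

/-- `θ` is a bijection from `{(x,y) : m(x) = r(y)}` onto `{(x,y) : s(x) = m(y)}`,
with the stated inverse. Here `m = s ∘ p₁`. -/
theorem stmt8 {G : Type*} (Gp : PreGroupoid G) (G₁ G₂ : Set G)
    (h1 : Gp.IsSubgroupoid G₁) (h2 : Gp.IsSubgroupoid G₂)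
    (hinter : G₁ ∩ G₂ = Gp.units)
    (p₁ p₂ : G → G)
    (hfact : Gp.IsFactorization G₁ G₂ p₁ p₂)
    (θ θinv : G × G → G × G)
    (hθ : ∀ p, θ p = (Gp.mul p.1 (p₁ (Gp.mul (Gp.inv (p₂ p.1)) p.2)),
                      Gp.mul (Gp.inv (p₂ p.1)) p.2))
    (hθinv : ∀ p, θinv p = (Gp.mul p.1 (Gp.inv (p₁ p.2)),
                            Gp.mul (p₂ (Gp.mul p.1 (Gp.inv (p₁ p.2)))) p.2)) :
    (∀ x y, Gp.s (p₁ x) = Gp.r y → Gp.s (θ (x, y)).1 = Gp.s (p₁ (θ (x, y)).2)) ∧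
    (∀ x y, Gp.s x = Gp.s (p₁ y) → Gp.s (p₁ (θinv (x, y)).1) = Gp.r (θinv (x, y)).2) ∧
    (∀ x y, Gp.s (p₁ x) = Gp.r y → θinv (θ (x, y)) = (x, y)) ∧
    (∀ x y, Gp.s x = Gp.s (p₁ y) → θ (θinv (x, y)) = (x, y)) :=
  stmt8_general Gp G₁ G₂ p₁ p₂ hfact θ θinv hθ hθinv
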